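/- Let H : ℝ^d → ℝ (or H on the torus Ω = ℝ^d/ℤ^d) be an even C¹ function whose gradient is L-Lipschitz, and define F(p) = (1/(2N²))∑_{i=1}^N∑_{j=1}^N H(p_i − p_j) for p = (p_1,…,p_N). Then the gradient of F is (2L/N)-Lipschitz: for all p⁽¹⁾, p⁽²⁾, ‖∇F(p⁽¹⁾) − ∇F(p⁽²⁾)‖₂ ≤ (2L/N)‖p⁽¹⁾ − p⁽²⁾‖₂, where ∂_k F(p) = (1/N²)∑_{i=1}^N ∇H(p_k − p_i). -/

import Mathlib

open MeasureTheory Filter Topology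
open scoped NNReal

noncomputable section

/-- Points in `ℝ^d` (Euclidean norm). -/
abbrev Pt (d : ℕ) : Type := EuclideanSpace ℝ (Fin d)

/-- Configurations `p = (p_1, …, p_N)` of `N` points, with the Euclidean norm
`‖p‖₂ = (∑ᵢ ‖pᵢ‖₂²)^{1/2}` on the concatenated vector. -/
abbrev Config (N d : ℕ) : Type := PiLp 2 (fun _ : Fin N => Pt d)

/-- The repulsion potential `F(p) = (1/(2N²)) ∑ᵢ∑ⱼ H(pᵢ − pⱼ)`. -/
def Frep (N d : ℕ) (H : Pt d → ℝ) (p : Config N d) : ℝ :=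
  (1 / (2 * (N : ℝ) ^ 2)) * ∑ i, ∑ j, H (p i - p j)

/-!
Since `H` is even, `∇H` is odd, so in `dF(p) v = (1/(2N²)) ∑ᵢⱼ ⟪∇H(pᵢ - pⱼ), vᵢ - vⱼ⟫` the terms
in `vⱼ` equal those in `vᵢ`; this gives `∂ₖF(p) = N⁻² ∑ᵢ ∇H(pₖ - pᵢ)`. With `u = p - q`, the `k`-th
component of `∑ᵢ ∇H(pₖ - pᵢ) - ∑ᵢ ∇H(qₖ - qᵢ)` has norm at most `L (N ‖uₖ‖ + ∑ᵢ ‖uᵢ‖)`; summing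
squares and using Cauchy–Schwarz `(∑ᵢ ‖uᵢ‖)² ≤ N ‖u‖²` bounds the whole difference by
`2 N L ‖u‖`, hence `∇F` is `2L/N`-Lipschitz.
-/

open scoped RealInnerProductSpace

def pairwiseSum {ι E F : Type*} [Fintype ι] [AddGroup E] [AddCommMonoid F] (g : E → F)
    (p : PiLp 2 (fun _ : ι => E)) : PiLp 2 (fun _ : ι => F) :=
  WithLp.toLp 2 fun k => ∑ i, g (p k - p i)

@[simp]
theorem pairwiseSum_apply {ι E F : Type*} [Fintype ι] [AddGroup E] [AddCommMonoid F]
    (g : E → F) (p : PiLp 2 (fun _ : ι => E)) (k : ι) :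
    pairwiseSum g p k = ∑ i, g (p k - p i) := rfl

theorem sum_sq_card_mul_add_sum_le {ι : Type*} [Fintype ι] (a : ι → ℝ) :
    ∑ k, (Fintype.card ι * a k + ∑ i, a i) ^ 2 ≤ (2 * Fintype.card ι) ^ 2 * ∑ k, a k ^ 2 := by
  have hCS := sq_sum_le_card_mul_sum_sq (s := Finset.univ) (f := a)
  rw [Finset.card_univ] at hCS
  calc ∑ k, (Fintype.card ι * a k + ∑ i, a i) ^ 2
      ≤ ∑ k, 2 * ((Fintype.card ι * a k) ^ 2 + (∑ i, a i) ^ 2) :=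
        Finset.sum_le_sum fun k _ => add_sq_le
    _ = 2 * (Fintype.card ι : ℝ) ^ 2 * ∑ k, a k ^ 2 + 2 * Fintype.card ι * (∑ i, a i) ^ 2 := by
        simp only [Finset.mul_sum, Finset.sum_add_distrib, mul_add, Finset.sum_const,
          Finset.card_univ, nsmul_eq_mul]
        ring_nf
    _ ≤ (2 * Fintype.card ι) ^ 2 * ∑ k, a k ^ 2 := by nlinarith

section Lipschitz

variable {ι E F : Type*} [Fintype ι] [SeminormedAddCommGroup E] [SeminormedAddCommGroup F]
  {g : E → F} {L : ℝ≥0}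

theorem LipschitzWith.norm_pairwiseSum_sub_le (hg : LipschitzWith L g)
    (p q : PiLp 2 (fun _ : ι => E)) (k : ι) :
    ‖pairwiseSum g p k - pairwiseSum g q k‖ ≤
      L * (Fintype.card ι * ‖(p - q) k‖ + ∑ i, ‖(p - q) i‖) :=
  calc ‖pairwiseSum g p k - pairwiseSum g q k‖
      ≤ ∑ i, ‖g (p k - p i) - g (q k - q i)‖ := by
        simpa only [pairwiseSum_apply, ← Finset.sum_sub_distrib] using norm_sum_le _ _
    _ ≤ ∑ i, L * (‖(p - q) k‖ + ‖(p - q) i‖) := Finset.sum_le_sum fun i _ => by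
        refine (hg.norm_sub_le _ _).trans (mul_le_mul_of_nonneg_left ?_ L.coe_nonneg)
        rw [show p k - p i - (q k - q i) = (p - q) k - (p - q) i by simp; abel]
        exact _root_.norm_sub_le _ _
    _ = L * (Fintype.card ι * ‖(p - q) k‖ + ∑ i, ‖(p - q) i‖) := by
        simp [← Finset.mul_sum, Finset.sum_add_distrib]

theorem LipschitzWith.pairwiseSum (hg : LipschitzWith L g) :
    LipschitzWith (2 * Fintype.card ι * L) (_root_.pairwiseSum (ι := ι) g) := by
  refine LipschitzWith.of_dist_le_mul fun p q => ?_
  rw [dist_eq_norm, dist_eq_norm]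
  refine le_of_sq_le_sq ?_ (by positivity)
  calc ‖_root_.pairwiseSum g p - _root_.pairwiseSum g q‖ ^ 2
      ≤ ∑ k, (L * (Fintype.card ι * ‖(p - q) k‖ + ∑ i, ‖(p - q) i‖)) ^ 2 := by
        rw [PiLp.norm_sq_eq_of_L2]
        exact Finset.sum_le_sum fun k _ =>
          pow_le_pow_left₀ (norm_nonneg _) (hg.norm_pairwiseSum_sub_le p q k) 2
    _ = (L : ℝ) ^ 2 * ∑ k, (Fintype.card ι * ‖(p - q) k‖ + ∑ i, ‖(p - q) i‖) ^ 2 := by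
        simp only [mul_pow, ← Finset.mul_sum]
    _ ≤ (L : ℝ) ^ 2 * ((2 * Fintype.card ι) ^ 2 * ∑ k, ‖(p - q) k‖ ^ 2) := by
        gcongr
        exact sum_sq_card_mul_add_sum_le _
    _ = (↑(2 * Fintype.card ι * L) * ‖p - q‖) ^ 2 := by
        rw [mul_pow _ ‖p - q‖, PiLp.norm_sq_eq_of_L2 _ (p - q)]
        push_cast
        ring

end Lipschitz

section Gradient

variable {ι E : Type*} [Fintype ι] [NormedAddCommGroup E] [InnerProductSpace ℝ E]

theorem sum_sum_inner_sub_eq {g : E → E} (hg : Function.Odd g) (p v : ι → E) :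
    ∑ i, ∑ j, ⟪g (p i - p j), v i - v j⟫ = 2 * ∑ i, ∑ j, ⟪g (p i - p j), v i⟫ := by
  have hswap : ∑ i, ∑ j, ⟪g (p i - p j), v j⟫ = -∑ i, ∑ j, ⟪g (p i - p j), v i⟫ := by
    rw [Finset.sum_comm]
    simp only [← Finset.sum_neg_distrib, ← inner_neg_left, ← hg (_ - _), neg_sub]
  simp only [inner_sub_right, Finset.sum_sub_distrib, hswap]
  ring

variable [CompleteSpace E]

theorem Function.Even.odd_gradient {H : E → ℝ} (hH : Function.Even H) :
    Function.Odd (gradient H) := by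
  intro x
  have hfd : fderiv ℝ H x = -(fderiv ℝ H (-x)) := by
    have := (ContinuousLinearEquiv.neg ℝ (M := E)).comp_right_fderiv (f := H) (x := x)
    rw [show H ∘ ContinuousLinearEquiv.neg ℝ = H from funext hH] at this
    rw [this]
    ext v
    simp
  simp only [gradient, hfd, map_neg, neg_neg]

theorem HasGradientAt.const_mul {f : E → ℝ} {g x : E} (hf : HasGradientAt f g x) (c : ℝ) :
    HasGradientAt (fun y => c * f y) (c • g) x := by
  rw [hasGradientAt_iff_hasFDerivAt] at hf ⊢
  simpa using hf.const_mul c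

theorem hasGradientAt_sum_sum_sub {H : E → ℝ} (hH : Function.Even H) (hd : Differentiable ℝ H)
    (p : PiLp 2 (fun _ : ι => E)) :
    HasGradientAt (fun q : PiLp 2 (fun _ : ι => E) => ∑ i, ∑ j, H (q i - q j))
      ((2 : ℝ) • pairwiseSum (gradient H) p) p := by
  let proj := fun i => PiLp.proj (𝕜 := ℝ) 2 (fun _ : ι => E) i
  have hterm : ∀ i j, HasFDerivAt (fun q : PiLp 2 (fun _ : ι => E) => H (q i - q j))
      ((fderiv ℝ H (p i - p j)).comp (proj i - proj j)) p := fun i j =>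
    (hd _).hasFDerivAt.comp p ((proj i).hasFDerivAt.sub (proj j).hasFDerivAt)
  rw [hasGradientAt_iff_hasFDerivAt]
  refine (HasFDerivAt.fun_sum fun i _ => HasFDerivAt.fun_sum fun j _ => hterm i j).congr_fderiv
    (ContinuousLinearMap.ext fun v => ?_)
  have := sum_sum_inner_sub_eq hH.odd_gradient p v
  simp only [sum_apply, ContinuousLinearMap.comp_apply,
    sub_apply, proj, PiLp.proj_apply, ← inner_gradient_left, this,
    InnerProductSpace.toDual_apply_apply, PiLp.inner_apply, PiLp.smul_apply, pairwiseSum_apply,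
    real_inner_smul_left, sum_inner, Finset.mul_sum]

end Gradient

theorem gradient_Frep_lipschitz {d N : ℕ} (L : ℝ≥0) (H : Pt d → ℝ)
    (hEven : ∀ x, H (-x) = H x) (hdiff : ContDiff ℝ 1 H)
    (hLip : LipschitzWith L (gradient H)) :
    (∀ p : Config N d, ∀ k : Fin N,
        gradient (Frep N d H) p k = ((N : ℝ) ^ 2)⁻¹ • ∑ i, gradient H (p k - p i)) ∧
      LipschitzWith (2 * L / N) (gradient (Frep N d H)) := by
  have hgrad : gradient (Frep N d H) = fun p => ((N : ℝ) ^ 2)⁻¹ • pairwiseSum (gradient H) p := by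
    funext p
    have h := ((hasGradientAt_sum_sum_sub hEven (hdiff.differentiable one_ne_zero) p).const_mul
      (1 / (2 * (N : ℝ) ^ 2))).gradient
    rwa [smul_smul, show 1 / (2 * (N : ℝ) ^ 2) * 2 = ((N : ℝ) ^ 2)⁻¹ by ring] at h
  refine ⟨fun p k => by rw [hgrad]; rfl, ?_⟩
  have hconst : 2 * L / N = ‖((N : ℝ) ^ 2)⁻¹‖₊ * (2 * Fintype.card (Fin N) * L) := by
    rw [Fintype.card_fin, nnnorm_inv, nnnorm_pow, Real.nnnorm_natCast]
    rcases eq_or_ne N 0 with rfl | hN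
    · simp
    · field_simp
  rw [hgrad, hconst]
  exact (lipschitzWith_smul _).comp hLip.pairwiseSum
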